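/- The SimRank operator is a contraction: let V be finite with all in-neighborhoods nonempty and C ∈ (0,1). Define T on functions s : V × V → ℝ by (Ts)(u,u) = 1 and (Ts)(u,v) = C/(|I(u)||I(v)|) Σ_{a∈I(u)} Σ_{b∈I(v)} s(a,b) for u ≠ v. Then for any s, s', sup_{u,v} |(Ts)(u,v) - (Ts')(u,v)| ≤ C · sup_{u,v} |s(u,v) - s'(u,v)|; hence T has a unique fixed point. -/

import Mathlib

/-!
Off the diagonal, `T s` is `C` times an average of values of `s`, and averaging does not increase
the sup distance, while on the diagonal `T s` and `T s'` agree. Hence `T` is `C`-Lipschitz for the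
sup metric on `V → V → ℝ`, whose distance is exactly the supremum in the statement, and the Banach
fixed-point theorem gives the unique fixed point.
-/

open Finset

lemma abs_sum_sub_sum_le_card_mul {ι : Type*} (A : Finset ι) (f g : ι → ℝ) {M : ℝ}
    (h : ∀ i ∈ A, |f i - g i| ≤ M) :
    |∑ i ∈ A, f i - ∑ i ∈ A, g i| ≤ #A * M := by
  rw [← sum_sub_distrib]
  calc |∑ i ∈ A, (f i - g i)| ≤ ∑ i ∈ A, |f i - g i| := abs_sum_le_sum_abs _ _
    _ ≤ #A • M := sum_le_card_nsmul _ _ _ h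
    _ = #A * M := nsmul_eq_mul _ _

/-- With the junk value `C / 0 = 0`, the bound also holds for `A = ∅`. -/
lemma abs_div_card_mul_sum_sub_le {ι : Type*} {C M : ℝ} (hC : 0 ≤ C) (hM : 0 ≤ M)
    (A : Finset ι) (f g : ι → ℝ) (h : ∀ i ∈ A, |f i - g i| ≤ M) :
    |C / #A * ∑ i ∈ A, f i - C / #A * ∑ i ∈ A, g i| ≤ C * M := by
  rcases A.eq_empty_or_nonempty with rfl | hA
  · simpa using mul_nonneg hC hM
  have hcard : (0 : ℝ) < #A := by exact_mod_cast hA.card_pos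
  rw [← mul_sub, abs_mul, abs_of_nonneg (by positivity)]
  calc C / #A * |∑ i ∈ A, f i - ∑ i ∈ A, g i| ≤ C / #A * (#A * M) := by
        gcongr; exact abs_sum_sub_sum_le_card_mul A f g h
    _ = C * M := by field_simp

section SupDist

variable {α β : Type*} [Fintype α] [Fintype β]

lemma abs_apply_apply_sub_le_dist (s s' : α → β → ℝ) (a : α) (b : β) :
    |s a b - s' a b| ≤ dist s s' := by
  rw [← Real.dist_eq]
  exact (dist_le_pi_dist (s a) (s' a) b).trans (dist_le_pi_dist s s' a)

lemma iSup_abs_apply_sub_eq_dist (s s' : α → β → ℝ) :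
    (⨆ p : α × β, |s p.1 p.2 - s' p.1 p.2|) = dist s s' := by
  refine le_antisymm (Real.iSup_le (fun p => abs_apply_apply_sub_le_dist s s' p.1 p.2)
    dist_nonneg) ?_
  have hbdd : BddAbove (Set.range fun p : α × β => |s p.1 p.2 - s' p.1 p.2|) :=
    (Set.finite_range _).bddAbove
  have hsup : 0 ≤ ⨆ p : α × β, |s p.1 p.2 - s' p.1 p.2| :=
    Real.iSup_nonneg fun _ => abs_nonneg _
  refine (dist_pi_le_iff hsup).2 fun a => (dist_pi_le_iff hsup).2 fun b => ?_
  rw [Real.dist_eq]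
  exact le_ciSup hbdd (a, b)

end SupDist

section SimRank

variable {V : Type*} [DecidableEq V]

noncomputable def simrankOp (I : V → Finset V) (C : ℝ) (s : V → V → ℝ) (u v : V) : ℝ :=
  if u = v then 1 else C / (#(I u) * #(I v)) * ∑ a ∈ I u, ∑ b ∈ I v, s a b

lemma simrankOp_of_ne (I : V → Finset V) (C : ℝ) (s : V → V → ℝ) {u v : V} (h : u ≠ v) :
    simrankOp I C s u v = C / #(I u ×ˢ I v) * ∑ p ∈ I u ×ˢ I v, s p.1 p.2 := by
  rw [simrankOp, if_neg h, sum_product, card_product, Nat.cast_mul]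

variable [Fintype V] (I : V → Finset V) {C : ℝ}

lemma dist_simrankOp_le (hC : 0 ≤ C) (s s' : V → V → ℝ) :
    dist (simrankOp I C s) (simrankOp I C s') ≤ C * dist s s' := by
  have hbound : 0 ≤ C * dist s s' := mul_nonneg hC dist_nonneg
  refine (dist_pi_le_iff hbound).2 fun u => (dist_pi_le_iff hbound).2 fun v => ?_
  rw [Real.dist_eq]
  by_cases huv : u = v
  · simpa [simrankOp, huv] using hbound
  · rw [simrankOp_of_ne I C s huv, simrankOp_of_ne I C s' huv]
    exact abs_div_card_mul_sum_sub_le hC dist_nonneg _ _ _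
      fun p _ => abs_apply_apply_sub_le_dist s s' p.1 p.2

lemma contractingWith_simrankOp (hC0 : 0 ≤ C) (hC1 : C < 1) :
    ContractingWith ⟨C, hC0⟩ (simrankOp I C) :=
  ⟨by exact_mod_cast hC1, LipschitzWith.of_dist_le_mul (dist_simrankOp_le I hC0)⟩

end SimRank

theorem simrank_operator_contraction_general {V : Type*} [Fintype V]
    [DecidableEq V]
    (I : V → Finset V)
    (C : ℝ) (hC0 : 0 < C) (hC1 : C < 1)
    (T : (V → V → ℝ) → V → V → ℝ)
    (hT : ∀ s u v, T s u v =
      if u = v then 1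
      else C / ((I u).card * (I v).card) * ∑ a ∈ I u, ∑ b ∈ I v, s a b) :
    (∀ s s' : V → V → ℝ,
      (⨆ p : V × V, |T s p.1 p.2 - T s' p.1 p.2|) ≤
        C * ⨆ p : V × V, |s p.1 p.2 - s' p.1 p.2|) ∧
    (∃! s : V → V → ℝ, T s = s) := by
  obtain rfl : T = simrankOp I C := funext fun s => funext fun u => funext (hT s u)
  refine ⟨fun s s' => ?_, ?_⟩
  · rw [iSup_abs_apply_sub_eq_dist, iSup_abs_apply_sub_eq_dist]
    exact dist_simrankOp_le I hC0.le s s'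
  · have hT := contractingWith_simrankOp I hC0.le hC1
    exact ⟨_, hT.fixedPoint_isFixedPt, fun s hs => hT.fixedPoint_unique hs⟩

/-- The SimRank operator `T`, defined on functions `s : V × V → ℝ` by
`(Ts)(u,u) = 1` and
`(Ts)(u,v) = C/(|I(u)||I(v)|) Σ_{a∈I(u)} Σ_{b∈I(v)} s(a,b)` for `u ≠ v`, is a
contraction with factor `C` in the sup norm, and hence has a unique fixed
point. -/
theorem simrank_operator_contraction {V : Type*} [Fintype V] [Nonempty V]
    [DecidableEq V]
    (I : V → Finset V) (hI : ∀ v, (I v).Nonempty)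
    (C : ℝ) (hC0 : 0 < C) (hC1 : C < 1)
    (T : (V → V → ℝ) → V → V → ℝ)
    (hT : ∀ s u v, T s u v =
      if u = v then 1
      else C / ((I u).card * (I v).card) * ∑ a ∈ I u, ∑ b ∈ I v, s a b) :
    (∀ s s' : V → V → ℝ,
      (⨆ p : V × V, |T s p.1 p.2 - T s' p.1 p.2|) ≤
        C * ⨆ p : V × V, |s p.1 p.2 - s' p.1 p.2|) ∧
    (∃! s : V → V → ℝ, T s = s) :=
  simrank_operator_contraction_general I C hC0 hC1 T hT
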